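/- (Stone representation theorem for Stone spaces) Every compact Hausdorff totally disconnected space X is homeomorphic to the Stone space 𝒰(Clop(X)) of its Boolean algebra of clopen sets, via the map sending x to the ultrafilter {U clopen : x ∈ U}. -/

import Mathlib

variable {B : Type*}

/-- A filter of a Boolean algebra: a nonempty subset closed under `⊓` and upward closed. -/
def IsBFilter [BooleanAlgebra B] (F : Set B) : Prop :=
  F.Nonempty ∧ (∀ x ∈ F, ∀ y ∈ F, x ⊓ y ∈ F) ∧ ∀ x ∈ F, ∀ y : B, x ≤ y → y ∈ F

/-- A proper filter: a filter not containing `⊥`. -/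
def IsProperBFilter [BooleanAlgebra B] (F : Set B) : Prop :=
  IsBFilter F ∧ (⊥ : B) ∉ F

/-- An ultrafilter: a proper filter containing exactly one of `x`, `xᶜ` for every `x`. -/
def IsBUltrafilter [BooleanAlgebra B] (F : Set B) : Prop :=
  IsProperBFilter F ∧ ∀ x : B, Xor' (x ∈ F) (xᶜ ∈ F)

/-- The underlying set of the Stone space of a Boolean algebra: its set of ultrafilters. -/
abbrev USpace (B : Type*) [BooleanAlgebra B] : Type _ := {F : Set B // IsBUltrafilter F}

/-- The basic (cl)open set `U_x` of ultrafilters containing `x`. -/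
def Ubasic [BooleanAlgebra B] (x : B) : Set (USpace B) := {F | x ∈ F.1}

/-- The Stone topology, generated by the basis `{U_x : x ∈ B}`. -/
instance (B : Type*) [BooleanAlgebra B] : TopologicalSpace (USpace B) :=
  TopologicalSpace.generateFrom (Set.range (Ubasic (B := B)))

/-!
The map `x ↦ {C clopen : x ∈ C}` is continuous since the preimage of `U_C` is `C` itself, and
injective since clopen sets separate points of a compact Hausdorff totally disconnected space.
It is surjective by compactness: the clopen sets in an ultrafilter have the finite intersection
property, so they share a point `x`, and the ultrafilter is contained in, hence equal to, the one
of `x`. Finally, surjectivity turns the preimage identity into `g '' C = U_C`, so `g` maps the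
clopen basis of `X` to open sets.
-/

section

open TopologicalSpace Set

variable [BooleanAlgebra B]

theorem IsBFilter.top_mem {F : Set B} (hF : IsBFilter F) : ⊤ ∈ F :=
  let ⟨a, ha⟩ := hF.1
  hF.2.2 a ha ⊤ le_top

theorem IsBUltrafilter.eq_of_subset {F G : Set B} (hF : IsBUltrafilter F)
    (hG : IsBUltrafilter G) (hFG : F ⊆ G) : F = G := by
  refine hFG.antisymm fun x hxG => ?_
  rcases hF.2 x with ⟨hxF, -⟩ | ⟨hxcF, -⟩
  · exact hxF
  · rcases hG.2 x with ⟨-, hxcG⟩ | ⟨-, hxG'⟩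
    · exact (hxcG (hFG hxcF)).elim
    · exact (hxG' hxG).elim

variable {X : Type*} [TopologicalSpace X]

theorem isBUltrafilter_setOf_mem_clopens (x : X) : IsBUltrafilter {C : Clopens X | x ∈ C} := by
  refine ⟨⟨⟨⟨⊤, trivial⟩, fun _ ha _ hb => ⟨ha, hb⟩, fun _ ha _ hab => hab ha⟩, id⟩, fun C => ?_⟩
  by_cases h : x ∈ C
  · exact Or.inl ⟨h, fun hc => hc h⟩
  · exact Or.inr ⟨h, h⟩

def clopensUltrafilter (x : X) : USpace (Clopens X) :=
  ⟨{C | x ∈ C}, isBUltrafilter_setOf_mem_clopens x⟩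

theorem preimage_clopensUltrafilter_ubasic (C : Clopens X) :
    clopensUltrafilter ⁻¹' Ubasic C = C :=
  rfl

theorem continuous_clopensUltrafilter : Continuous (clopensUltrafilter (X := X)) := by
  rw [continuous_generateFrom_iff]
  rintro s ⟨C, rfl⟩
  exact C.isClopen.isOpen

theorem clopensUltrafilter_injective [TotallySeparatedSpace X] :
    Function.Injective (clopensUltrafilter (X := X)) := by
  intro x y hxy
  by_contra hne
  obtain ⟨U, hU, hxU, hyU⟩ := exists_isClopen_of_totally_separated hne
  have hyU' : (⟨U, hU⟩ : Clopens X) ∈ (clopensUltrafilter y).1 := hxy ▸ hxU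
  exact hyU hyU'

theorem IsProperBFilter.exists_forall_mem_clopens [CompactSpace X] {F : Set (Clopens X)}
    (hF : IsProperBFilter F) : ∃ x : X, ∀ C ∈ F, x ∈ C := by
  have : Nonempty F := ⟨⟨⊤, hF.1.top_mem⟩⟩
  have hne : (⋂ C : F, (C.1 : Set X)).Nonempty := by
    refine IsCompact.nonempty_iInter_of_directed_nonempty_isCompact_isClosed _
      (fun C D => ⟨⟨C.1 ⊓ D.1, hF.1.2.1 _ C.2 _ D.2⟩, inter_subset_left, inter_subset_right⟩)
      (fun C => ?_) (fun C => C.1.isClopen.isClosed.isCompact) (fun C => C.1.isClopen.isClosed)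
    rw [nonempty_iff_ne_empty]
    intro hC
    exact hF.2 (Clopens.ext (hC.trans Clopens.coe_bot.symm) ▸ C.2)
  obtain ⟨x, hx⟩ := hne
  exact ⟨x, fun C hC => mem_iInter.mp hx ⟨C, hC⟩⟩

theorem clopensUltrafilter_surjective [CompactSpace X] :
    Function.Surjective (clopensUltrafilter (X := X)) := by
  rintro ⟨F, hF⟩
  obtain ⟨x, hx⟩ := hF.1.exists_forall_mem_clopens
  exact ⟨x, Subtype.ext (hF.eq_of_subset (isBUltrafilter_setOf_mem_clopens x) hx).symm⟩

theorem image_clopensUltrafilter [CompactSpace X] (C : Clopens X) :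
    clopensUltrafilter '' (C : Set X) = Ubasic C := by
  rw [← preimage_clopensUltrafilter_ubasic, image_preimage_eq _ clopensUltrafilter_surjective]

theorem isOpenMap_clopensUltrafilter [CompactSpace X] [T2Space X] [TotallyDisconnectedSpace X] :
    IsOpenMap (clopensUltrafilter (X := X)) := by
  rw [isTopologicalBasis_isClopen.isOpenMap_iff]
  intro U hU
  rw [show U = (⟨U, hU⟩ : Clopens X) from rfl, image_clopensUltrafilter]
  exact isOpen_generateFrom_of_mem ⟨_, rfl⟩

end

open TopologicalSpace in
/-- Stone representation theorem for Stone spaces: every compact Hausdorff totally disconnected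
space `X` is homeomorphic to `𝒰(Clop(X))` via `x ↦ {U clopen : x ∈ U}`. -/
theorem stmt16 {X : Type*} [TopologicalSpace X] [CompactSpace X] [T2Space X]
    [TotallyDisconnectedSpace X] :
    ∃ g : X → USpace (Clopens X),
      (∀ (x : X) (C : Clopens X), C ∈ (g x).1 ↔ x ∈ (C : Set X)) ∧ IsHomeomorph g :=
  ⟨clopensUltrafilter, fun _ _ => Iff.rfl, continuous_clopensUltrafilter,
    isOpenMap_clopensUltrafilter, clopensUltrafilter_injective, clopensUltrafilter_surjective⟩
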